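/- arXiv:2212.05338 — 4 statements merged into one kernel-verified Lean document; each statement's English description precedes it below -/
import Mathlib

section
/- Let b_Z = 0, A = (0, 0, −(1/2)b_φ(x²+y²)), W = −(1/8)b_φ²(x²+y²)² + b_φ(w₃(x²+y²) + w₁x + w₂y), H = (1/2)Σ_i(p_i+A_i)² + W, and p_i^A = p_i + A_i. Then X₁^a = (p₁^A)² − b_φ x² p₃^A − (1/2)b_φ² x²(x²+y²) + 2b_φw₃x² + 2b_φw₁x satisfies {H, X₁^a} = 0. -/
noncomputable def pderiv (i : Fin 6) (F : (Fin 6 → ℝ) → ℝ) (q : Fin 6 → ℝ) : ℝ :=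
  fderiv ℝ F q (Pi.single i 1)

/-- Canonical Poisson bracket on phase space ℝ⁶: coordinates `q 0, q 1, q 2` are
positions and `q 3, q 4, q 5` are momenta. -/
noncomputable def poisson (F G : (Fin 6 → ℝ) → ℝ) (q : Fin 6 → ℝ) : ℝ :=
  ∑ k : Fin 3, (pderiv (Fin.castAdd 3 k) F q * pderiv (Fin.natAdd 3 k) G q
    - pderiv (Fin.castAdd 3 k) G q * pderiv (Fin.natAdd 3 k) F q)

/-- squared planar radius -/
noncomputable def r2 (q : Fin 6 → ℝ) : ℝ := (q 0)^2 + (q 1)^2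

/-- covariant momentum p₃ + A₃ with A₃ = -(1/2) bφ (x²+y²) -/
noncomputable def P3A (bφ : ℝ) (q : Fin 6 → ℝ) : ℝ := q 5 - (1/2)*bφ*r2 q

/-- covariant angular momentum l₃^A = x p₂ - y p₁ (here A₁ = A₂ = 0) -/
noncomputable def L3A (q : Fin 6 → ℝ) : ℝ := q 0 * q 4 - q 1 * q 3

/-- Hamiltonian of the b_Z = 0 system -/
noncomputable def Ham (bφ w₁ w₂ w₃ : ℝ) (q : Fin 6 → ℝ) : ℝ :=
  (1/2)*((q 3)^2 + (q 4)^2 + (P3A bφ q)^2)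
    - (1/8)*bφ^2*(r2 q)^2 + bφ*(w₃*r2 q + w₁*q 0 + w₂*q 1)

noncomputable def X1a (bφ w₁ w₃ : ℝ) (q : Fin 6 → ℝ) : ℝ :=
  (q 3)^2 - bφ*(q 0)^2*P3A bφ q - (1/2)*bφ^2*(q 0)^2*r2 q
    + 2*bφ*w₃*(q 0)^2 + 2*bφ*w₁*q 0

noncomputable def X1b (bφ w₁ w₂ w₃ : ℝ) (q : Fin 6 → ℝ) : ℝ :=
  q 3 * q 4 - bφ*q 0*q 1*P3A bφ q - (1/2)*bφ^2*q 0*q 1*r2 q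
    + 2*bφ*w₃*q 0*q 1 + bφ*w₂*q 0 + bφ*w₁*q 1

noncomputable def X1c (bφ w₁ w₂ w₃ sZ3 : ℝ) (q : Fin 6 → ℝ) : ℝ :=
  L3A q * P3A bφ q + w₂*q 3 - w₁*q 4 + ((1/2)*bφ*r2 q - 2*w₃)*L3A q
    + sZ3*P3A bφ q + (1/2)*bφ*sZ3*r2 q

/-- first--order integral X₃¹ = p₃ -/
noncomputable def X31 (q : Fin 6 → ℝ) : ℝ := q 5


noncomputable def pr (j : Fin 6) : (Fin 6 → ℝ) →L[ℝ] ℝ :=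
  ContinuousLinearMap.proj (R := ℝ) (φ := fun _ : Fin 6 => ℝ) j

lemma hcoord (j : Fin 6) (q : Fin 6 → ℝ) :
    HasFDerivAt (fun q : Fin 6 → ℝ => q j) (pr j) q :=
  hasFDerivAt_apply j q

lemma HasFDerivAt.sq' {f : (Fin 6 → ℝ) → ℝ} {f' : (Fin 6 → ℝ) →L[ℝ] ℝ} {q}
    (h : HasFDerivAt f f' q) : HasFDerivAt (fun q => f q ^ 2) ((2 * f q) • f') q := by
  have : HasFDerivAt (fun q => f q * f q) (f q • f' + f q • f') q := h.mul h
  simp only [← pow_two] at this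
  convert this using 1
  ext v
  simp
  ring

/-- `X₁^a` is a first integral of the b_Z = 0 system. -/
theorem X1a_is_first_integral (bφ w₁ w₂ w₃ : ℝ) :
    ∀ q : Fin 6 → ℝ, poisson (Ham bφ w₁ w₂ w₃) (X1a bφ w₁ w₃) q = 0 := by
  intro q
  have h0 := hcoord 0 q
  have h1 := hcoord 1 q
  have h3 := hcoord 3 q
  have h5 := hcoord 5 q
  have hr2 := h0.sq'.add h1.sq'
  have hPA := h5.sub (hr2.const_mul (1/2*bφ))
  have hH : HasFDerivAt (Ham bφ w₁ w₂ w₃)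
      ((-bφ*q 0*P3A bφ q - (1/2)*bφ^2*r2 q*q 0 + 2*bφ*w₃*q 0 + bφ*w₁) • pr 0
        + (-bφ*q 1*P3A bφ q - (1/2)*bφ^2*r2 q*q 1 + 2*bφ*w₃*q 1 + bφ*w₂) • pr 1
        + (q 3) • pr 3 + (q 4) • pr 4 + (P3A bφ q) • pr 5) q := by
    have h := ((((h3.sq'.add (hcoord 4 q).sq').add hPA.sq').const_mul (1/2)).sub
        (hr2.sq'.const_mul (1/8*bφ^2))).add
        ((((hr2.const_mul w₃).add (h0.const_mul w₁)).add (h1.const_mul w₂)).const_mul bφ)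
    unfold Ham P3A r2
    refine h.congr_fderiv ?_
    ext v
    simp [pr]
    ring
  have hX : HasFDerivAt (X1a bφ w₁ w₃)
      ((-2*bφ*q 0*P3A bφ q - bφ^2*q 0*r2 q + 4*bφ*w₃*q 0 + 2*bφ*w₁) • pr 0
        + (2*q 3) • pr 3 + (-bφ*(q 0)^2) • pr 5) q := by
    have h := (((h3.sq'.sub ((h0.sq'.const_mul bφ).mul hPA)).sub
        ((h0.sq'.const_mul (1/2*bφ^2)).mul hr2)).add
        (h0.sq'.const_mul (2*bφ*w₃))).add (h0.const_mul (2*bφ*w₁))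
    unfold X1a P3A r2
    refine h.congr_fderiv ?_
    ext v
    simp [pr]
    ring
  have e0 : Fin.castAdd 3 (0 : Fin 3) = (0 : Fin 6) := rfl
  have e1 : Fin.castAdd 3 (1 : Fin 3) = (1 : Fin 6) := rfl
  have e2 : Fin.castAdd 3 (2 : Fin 3) = (2 : Fin 6) := rfl
  have e3 : Fin.natAdd 3 (0 : Fin 3) = (3 : Fin 6) := rfl
  have e4 : Fin.natAdd 3 (1 : Fin 3) = (4 : Fin 6) := rfl
  have e5 : Fin.natAdd 3 (2 : Fin 3) = (5 : Fin 6) := rfl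
  simp only [poisson, Fin.sum_univ_three, e0, e1, e2, e3, e4, e5, pderiv,
    hH.fderiv, hX.fderiv]
  simp [pr, Pi.single_apply]
  ring
end

section
/- Let b_Z = 0, A = (0, 0, −(1/2)b_φ(x²+y²)), W = −(1/8)b_φ²(x²+y²)² + b_φ(w₃(x²+y²) + w₁x + w₂y), H = (1/2)Σ_i(p_i+A_i)² + W. Then X₁^b = p₁^A p₂^A − b_φ x y p₃^A − (1/2)b_φ² x y(x²+y²) + 2b_φw₃xy + b_φw₂x + b_φw₁y satisfies {H, X₁^b} = 0. -/

lemma update_line (q : Fin 6 → ℝ) (i : Fin 6) :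
    (fun t : ℝ => Function.update q i t)
      = fun t => q + (t - q i) • (Pi.single i 1 : Fin 6 → ℝ) := by
  funext t j
  by_cases h : j = i
  · subst h; simp
  · simp [Function.update_of_ne h, Pi.single_eq_of_ne h]

lemma pderiv_eq (F : (Fin 6 → ℝ) → ℝ) (q : Fin 6 → ℝ) (i : Fin 6)
    (hF : DifferentiableAt ℝ F q) :
    pderiv i F q = deriv (fun t => F (Function.update q i t)) (q i) := by
  have hl : HasDerivAt (fun t : ℝ => Function.update q i t) (Pi.single i 1) (q i) := by
    rw [update_line]
    have h := (((hasDerivAt_id (q i)).sub_const (q i)).smul_const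
      (Pi.single i 1 : Fin 6 → ℝ)).const_add q
    simpa using h
  have hF' : HasFDerivAt F (fderiv ℝ F q) (Function.update q i (q i)) := by
    rw [Function.update_eq_self]; exact hF.hasFDerivAt
  have h2 := hF'.comp_hasDerivAt (q i) hl
  rw [pderiv]
  exact (h2.deriv).symm

lemma poly2 (a c d x : ℝ) :
    HasDerivAt (fun t : ℝ => a*t^2 + c*t + d) (2*a*x + c) x := by
  have h := (((hasDerivAt_pow 2 x).const_mul a).add
    (((hasDerivAt_id x).const_mul c).add_const d))
  convert h using 1
  case e'_8 => funext t; simp only [Pi.add_apply, id_eq]; ring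
  case e'_9 => push_cast; ring
  all_goals rfl

lemma pderiv_of_eq (F : (Fin 6 → ℝ) → ℝ) (q : Fin 6 → ℝ) (i : Fin 6) (a c d : ℝ)
    (hF : DifferentiableAt ℝ F q)
    (hfun : ∀ t, F (Function.update q i t) = a*t^2 + c*t + d) :
    pderiv i F q = 2*a*(q i) + c := by
  rw [pderiv_eq F q i hF]
  have h : (fun t => F (Function.update q i t)) = fun t => a*t^2 + c*t + d := funext hfun
  rw [h, (poly2 a c d (q i)).deriv]

lemma ham_diff (bφ w₁ w₂ w₃ : ℝ) (q : Fin 6 → ℝ) :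
    DifferentiableAt ℝ (Ham bφ w₁ w₂ w₃) q := by
  unfold Ham P3A r2; fun_prop

lemma x1b_diff (bφ w₁ w₂ w₃ : ℝ) (q : Fin 6 → ℝ) :
    DifferentiableAt ℝ (X1b bφ w₁ w₂ w₃) q := by
  unfold X1b P3A r2; fun_prop

/-- `X₁^b` is a first integral of the b_Z = 0 system. -/
theorem X1b_is_first_integral (bφ w₁ w₂ w₃ : ℝ) :
    ∀ q : Fin 6 → ℝ, poisson (Ham bφ w₁ w₂ w₃) (X1b bφ w₁ w₂ w₃) q = 0 := by
  intro q
  have hH0 : pderiv 0 (Ham bφ w₁ w₂ w₃) q = 2*(bφ*w₃ - (1/2)*bφ*q 5)*(q 0) + (bφ*w₁) := by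
    apply pderiv_of_eq _ _ _ (bφ*w₃ - (1/2)*bφ*q 5) (bφ*w₁) ((1/2)*((q 3)^2+(q 4)^2+(q 5)^2) - (1/2)*bφ*q 5*(q 1)^2 + bφ*w₃*(q 1)^2 + bφ*w₂*q 1) (ham_diff bφ w₁ w₂ w₃ q)
    intro t
    simp [Ham, X1b, P3A, r2, Function.update_apply]
    ring
  have hH1 : pderiv 1 (Ham bφ w₁ w₂ w₃) q = 2*(bφ*w₃ - (1/2)*bφ*q 5)*(q 1) + (bφ*w₂) := by
    apply pderiv_of_eq _ _ _ (bφ*w₃ - (1/2)*bφ*q 5) (bφ*w₂) ((1/2)*((q 3)^2+(q 4)^2+(q 5)^2) - (1/2)*bφ*q 5*(q 0)^2 + bφ*w₃*(q 0)^2 + bφ*w₁*q 0) (ham_diff bφ w₁ w₂ w₃ q)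
    intro t
    simp [Ham, X1b, P3A, r2, Function.update_apply]
    ring
  have hH2 : pderiv 2 (Ham bφ w₁ w₂ w₃) q = 2*(0)*(q 2) + (0) := by
    apply pderiv_of_eq _ _ _ (0) (0) ((1/2)*((q 3)^2+(q 4)^2+(q 5)^2) - (1/2)*bφ*q 5*((q 0)^2+(q 1)^2) + bφ*(w₃*((q 0)^2+(q 1)^2)+w₁*q 0+w₂*q 1)) (ham_diff bφ w₁ w₂ w₃ q)
    intro t
    simp [Ham, X1b, P3A, r2, Function.update_apply]
    ring
  have hH3 : pderiv 3 (Ham bφ w₁ w₂ w₃) q = 2*((1/2))*(q 3) + (0) := by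
    apply pderiv_of_eq _ _ _ ((1/2)) (0) ((1/2)*((q 4)^2+(q 5)^2) - (1/2)*bφ*q 5*((q 0)^2+(q 1)^2) + bφ*(w₃*((q 0)^2+(q 1)^2)+w₁*q 0+w₂*q 1)) (ham_diff bφ w₁ w₂ w₃ q)
    intro t
    simp [Ham, X1b, P3A, r2, Function.update_apply]
    ring
  have hH4 : pderiv 4 (Ham bφ w₁ w₂ w₃) q = 2*((1/2))*(q 4) + (0) := by
    apply pderiv_of_eq _ _ _ ((1/2)) (0) ((1/2)*((q 3)^2+(q 5)^2) - (1/2)*bφ*q 5*((q 0)^2+(q 1)^2) + bφ*(w₃*((q 0)^2+(q 1)^2)+w₁*q 0+w₂*q 1)) (ham_diff bφ w₁ w₂ w₃ q)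
    intro t
    simp [Ham, X1b, P3A, r2, Function.update_apply]
    ring
  have hH5 : pderiv 5 (Ham bφ w₁ w₂ w₃) q = 2*((1/2))*(q 5) + (-(1/2)*bφ*((q 0)^2+(q 1)^2)) := by
    apply pderiv_of_eq _ _ _ ((1/2)) (-(1/2)*bφ*((q 0)^2+(q 1)^2)) ((1/2)*((q 3)^2+(q 4)^2) + bφ*(w₃*((q 0)^2+(q 1)^2)+w₁*q 0+w₂*q 1)) (ham_diff bφ w₁ w₂ w₃ q)
    intro t
    simp [Ham, X1b, P3A, r2, Function.update_apply]
    ring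
  have hX0 : pderiv 0 (X1b bφ w₁ w₂ w₃) q = 2*(0)*(q 0) + (-bφ*q 1*q 5 + 2*bφ*w₃*q 1 + bφ*w₂) := by
    apply pderiv_of_eq _ _ _ (0) (-bφ*q 1*q 5 + 2*bφ*w₃*q 1 + bφ*w₂) (q 3*q 4 + bφ*w₁*q 1) (x1b_diff bφ w₁ w₂ w₃ q)
    intro t
    simp [Ham, X1b, P3A, r2, Function.update_apply]
    ring
  have hX1 : pderiv 1 (X1b bφ w₁ w₂ w₃) q = 2*(0)*(q 1) + (-bφ*q 0*q 5 + 2*bφ*w₃*q 0 + bφ*w₁) := by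
    apply pderiv_of_eq _ _ _ (0) (-bφ*q 0*q 5 + 2*bφ*w₃*q 0 + bφ*w₁) (q 3*q 4 + bφ*w₂*q 0) (x1b_diff bφ w₁ w₂ w₃ q)
    intro t
    simp [Ham, X1b, P3A, r2, Function.update_apply]
    ring
  have hX2 : pderiv 2 (X1b bφ w₁ w₂ w₃) q = 2*(0)*(q 2) + (0) := by
    apply pderiv_of_eq _ _ _ (0) (0) (q 3*q 4 - bφ*q 0*q 1*q 5 + 2*bφ*w₃*q 0*q 1 + bφ*w₂*q 0 + bφ*w₁*q 1) (x1b_diff bφ w₁ w₂ w₃ q)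
    intro t
    simp [Ham, X1b, P3A, r2, Function.update_apply]
    ring
  have hX3 : pderiv 3 (X1b bφ w₁ w₂ w₃) q = 2*(0)*(q 3) + (q 4) := by
    apply pderiv_of_eq _ _ _ (0) (q 4) (-bφ*q 0*q 1*q 5 + 2*bφ*w₃*q 0*q 1 + bφ*w₂*q 0 + bφ*w₁*q 1) (x1b_diff bφ w₁ w₂ w₃ q)
    intro t
    simp [Ham, X1b, P3A, r2, Function.update_apply]
    ring
  have hX4 : pderiv 4 (X1b bφ w₁ w₂ w₃) q = 2*(0)*(q 4) + (q 3) := by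
    apply pderiv_of_eq _ _ _ (0) (q 3) (-bφ*q 0*q 1*q 5 + 2*bφ*w₃*q 0*q 1 + bφ*w₂*q 0 + bφ*w₁*q 1) (x1b_diff bφ w₁ w₂ w₃ q)
    intro t
    simp [Ham, X1b, P3A, r2, Function.update_apply]
    ring
  have hX5 : pderiv 5 (X1b bφ w₁ w₂ w₃) q = 2*(0)*(q 5) + (-bφ*q 0*q 1) := by
    apply pderiv_of_eq _ _ _ (0) (-bφ*q 0*q 1) (q 3*q 4 + 2*bφ*w₃*q 0*q 1 + bφ*w₂*q 0 + bφ*w₁*q 1) (x1b_diff bφ w₁ w₂ w₃ q)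
    intro t
    simp [Ham, X1b, P3A, r2, Function.update_apply]
    ring
  have e0 : (Fin.castAdd 3 (0 : Fin 3)) = (0 : Fin 6) := rfl
  have e1 : (Fin.castAdd 3 (1 : Fin 3)) = (1 : Fin 6) := rfl
  have e2 : (Fin.castAdd 3 (2 : Fin 3)) = (2 : Fin 6) := rfl
  have f0 : (Fin.natAdd 3 (0 : Fin 3)) = (3 : Fin 6) := rfl
  have f1 : (Fin.natAdd 3 (1 : Fin 3)) = (4 : Fin 6) := rfl
  have f2 : (Fin.natAdd 3 (2 : Fin 3)) = (5 : Fin 6) := rfl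
  rw [poisson, Fin.sum_univ_three, e0, e1, e2, f0, f1, f2,
    hH0, hH1, hH2, hH3, hH4, hH5, hX0, hX1, hX2, hX3, hX4, hX5]
  ring
end

section
/- Let b_Z = 0, A = (0, 0, −(1/2)b_φ(x²+y²)), W = −(1/8)b_φ²(x²+y²)² + b_φ(w₃(x²+y²) + w₁x + w₂y), H = (1/2)Σ_i(p_i+A_i)² + W, l₃^A = x p₂^A − y p₁^A. Then X₁^c = l₃^A p₃^A + w₂ p₁^A − w₁ p₂^A + ((1/2)b_φ(x²+y²) − 2w₃) l₃^A + s_{Z3} p₃^A + (1/2)b_φ s_{Z3}(x²+y²) satisfies {H, X₁^c} = 0 for every real constant s_{Z3}. -/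
section aux

lemma pderiv_coord (i j : Fin 6) (q : Fin 6 → ℝ) :
    pderiv i (fun p => p j) q = if j = i then 1 else 0 := by
  have h : (fun p : Fin 6 → ℝ => p j) = (ContinuousLinearMap.proj j : (Fin 6 → ℝ) →L[ℝ] ℝ) := rfl
  rw [pderiv, h, ContinuousLinearMap.fderiv]
  simp [Pi.single_apply]

lemma pderiv_fun_add {f g : (Fin 6 → ℝ) → ℝ} {q} (i : Fin 6)
    (hf : DifferentiableAt ℝ f q) (hg : DifferentiableAt ℝ g q) :
    pderiv i (fun p => f p + g p) q = pderiv i f q + pderiv i g q := by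
  simp [pderiv, fderiv_fun_add hf hg]

lemma pderiv_fun_sub {f g : (Fin 6 → ℝ) → ℝ} {q} (i : Fin 6)
    (hf : DifferentiableAt ℝ f q) (hg : DifferentiableAt ℝ g q) :
    pderiv i (fun p => f p - g p) q = pderiv i f q - pderiv i g q := by
  simp [pderiv, fderiv_fun_sub hf hg]

lemma pderiv_fun_mul {f g : (Fin 6 → ℝ) → ℝ} {q} (i : Fin 6)
    (hf : DifferentiableAt ℝ f q) (hg : DifferentiableAt ℝ g q) :
    pderiv i (fun p => f p * g p) q = f q * pderiv i g q + g q * pderiv i f q := by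
  simp [pderiv, fderiv_fun_mul hf hg]

lemma pderiv_fun_sq {f : (Fin 6 → ℝ) → ℝ} {q} (i : Fin 6)
    (hf : DifferentiableAt ℝ f q) :
    pderiv i (fun p => f p ^ 2) q = 2 * f q * pderiv i f q := by
  have h : (fun p => f p ^ 2) = fun p => f p * f p := by ext p; ring
  rw [h, pderiv_fun_mul i hf hf]; ring

lemma pderiv_const (i : Fin 6) (c : ℝ) (q : Fin 6 → ℝ) :
    pderiv i (fun _ => c) q = 0 := by
  simp [pderiv]

lemma ham_eq (b w1 w2 w3 : ℝ) : Ham b w1 w2 w3 = fun p : Fin 6 → ℝ =>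
    (1/2)*((p 3)^2 + (p 4)^2 + (p 5 - (1/2)*b*((p 0)^2 + (p 1)^2))^2)
      - (1/8)*b^2*((p 0)^2 + (p 1)^2)^2
      + b*(w3*((p 0)^2 + (p 1)^2) + w1*p 0 + w2*p 1) := rfl

lemma x1c_eq (b w1 w2 w3 s : ℝ) : X1c b w1 w2 w3 s = fun p : Fin 6 → ℝ =>
    (p 0 * p 4 - p 1 * p 3) * (p 5 - (1/2)*b*((p 0)^2 + (p 1)^2))
      + w2*p 3 - w1*p 4
      + ((1/2)*b*((p 0)^2 + (p 1)^2) - 2*w3)*(p 0 * p 4 - p 1 * p 3)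
      + s*(p 5 - (1/2)*b*((p 0)^2 + (p 1)^2))
      + (1/2)*b*s*((p 0)^2 + (p 1)^2) := rfl

lemma dH0 (b w1 w2 w3 : ℝ) (q : Fin 6 → ℝ) :
    pderiv 0 (Ham b w1 w2 w3) q = -b*q 0*q 5 + 2*b*w3*q 0 + b*w1 := by
  rw [ham_eq]
  simp (disch := fun_prop) only [pderiv_fun_add, pderiv_fun_sub, pderiv_fun_mul,
    pderiv_fun_sq, pderiv_const, pderiv_coord]
  simp only [Fin.reduceEq, reduceIte]
  ring

lemma dH1 (b w1 w2 w3 : ℝ) (q : Fin 6 → ℝ) :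
    pderiv 1 (Ham b w1 w2 w3) q = -b*q 1*q 5 + 2*b*w3*q 1 + b*w2 := by
  rw [ham_eq]
  simp (disch := fun_prop) only [pderiv_fun_add, pderiv_fun_sub, pderiv_fun_mul,
    pderiv_fun_sq, pderiv_const, pderiv_coord]
  simp only [Fin.reduceEq, reduceIte]
  ring

lemma dH2 (b w1 w2 w3 : ℝ) (q : Fin 6 → ℝ) :
    pderiv 2 (Ham b w1 w2 w3) q = 0 := by
  rw [ham_eq]
  simp (disch := fun_prop) only [pderiv_fun_add, pderiv_fun_sub, pderiv_fun_mul,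
    pderiv_fun_sq, pderiv_const, pderiv_coord]
  simp only [Fin.reduceEq, reduceIte]
  ring

lemma dH3 (b w1 w2 w3 : ℝ) (q : Fin 6 → ℝ) :
    pderiv 3 (Ham b w1 w2 w3) q = q 3 := by
  rw [ham_eq]
  simp (disch := fun_prop) only [pderiv_fun_add, pderiv_fun_sub, pderiv_fun_mul,
    pderiv_fun_sq, pderiv_const, pderiv_coord]
  simp only [Fin.reduceEq, reduceIte]
  ring

lemma dH4 (b w1 w2 w3 : ℝ) (q : Fin 6 → ℝ) :
    pderiv 4 (Ham b w1 w2 w3) q = q 4 := by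
  rw [ham_eq]
  simp (disch := fun_prop) only [pderiv_fun_add, pderiv_fun_sub, pderiv_fun_mul,
    pderiv_fun_sq, pderiv_const, pderiv_coord]
  simp only [Fin.reduceEq, reduceIte]
  ring

lemma dH5 (b w1 w2 w3 : ℝ) (q : Fin 6 → ℝ) :
    pderiv 5 (Ham b w1 w2 w3) q = q 5 - (1/2)*b*((q 0)^2 + (q 1)^2) := by
  rw [ham_eq]
  simp (disch := fun_prop) only [pderiv_fun_add, pderiv_fun_sub, pderiv_fun_mul,
    pderiv_fun_sq, pderiv_const, pderiv_coord]
  simp only [Fin.reduceEq, reduceIte]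
  ring

lemma dX0 (b w1 w2 w3 s : ℝ) (q : Fin 6 → ℝ) :
    pderiv 0 (X1c b w1 w2 w3 s) q = q 4*q 5 - 2*w3*q 4 := by
  rw [x1c_eq]
  simp (disch := fun_prop) only [pderiv_fun_add, pderiv_fun_sub, pderiv_fun_mul,
    pderiv_fun_sq, pderiv_const, pderiv_coord]
  simp only [Fin.reduceEq, reduceIte]
  ring

lemma dX1 (b w1 w2 w3 s : ℝ) (q : Fin 6 → ℝ) :
    pderiv 1 (X1c b w1 w2 w3 s) q = -q 3*q 5 + 2*w3*q 3 := by
  rw [x1c_eq]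
  simp (disch := fun_prop) only [pderiv_fun_add, pderiv_fun_sub, pderiv_fun_mul,
    pderiv_fun_sq, pderiv_const, pderiv_coord]
  simp only [Fin.reduceEq, reduceIte]
  ring

lemma dX2 (b w1 w2 w3 s : ℝ) (q : Fin 6 → ℝ) :
    pderiv 2 (X1c b w1 w2 w3 s) q = 0 := by
  rw [x1c_eq]
  simp (disch := fun_prop) only [pderiv_fun_add, pderiv_fun_sub, pderiv_fun_mul,
    pderiv_fun_sq, pderiv_const, pderiv_coord]
  simp only [Fin.reduceEq, reduceIte]
  ring

lemma dX3 (b w1 w2 w3 s : ℝ) (q : Fin 6 → ℝ) :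
    pderiv 3 (X1c b w1 w2 w3 s) q = -q 1*q 5 + w2 + 2*w3*q 1 := by
  rw [x1c_eq]
  simp (disch := fun_prop) only [pderiv_fun_add, pderiv_fun_sub, pderiv_fun_mul,
    pderiv_fun_sq, pderiv_const, pderiv_coord]
  simp only [Fin.reduceEq, reduceIte]
  ring

lemma dX4 (b w1 w2 w3 s : ℝ) (q : Fin 6 → ℝ) :
    pderiv 4 (X1c b w1 w2 w3 s) q = q 0*q 5 - w1 - 2*w3*q 0 := by
  rw [x1c_eq]
  simp (disch := fun_prop) only [pderiv_fun_add, pderiv_fun_sub, pderiv_fun_mul,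
    pderiv_fun_sq, pderiv_const, pderiv_coord]
  simp only [Fin.reduceEq, reduceIte]
  ring

lemma dX5 (b w1 w2 w3 s : ℝ) (q : Fin 6 → ℝ) :
    pderiv 5 (X1c b w1 w2 w3 s) q = q 0*q 4 - q 1*q 3 + s := by
  rw [x1c_eq]
  simp (disch := fun_prop) only [pderiv_fun_add, pderiv_fun_sub, pderiv_fun_mul,
    pderiv_fun_sq, pderiv_const, pderiv_coord]
  simp only [Fin.reduceEq, reduceIte]
  ring

end aux

/-- `X₁^c` is a first integral of the b_Z = 0 system, for every `s_{Z3}`. -/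
theorem X1c_is_first_integral (bφ w₁ w₂ w₃ sZ3 : ℝ) :
    ∀ q : Fin 6 → ℝ, poisson (Ham bφ w₁ w₂ w₃) (X1c bφ w₁ w₂ w₃ sZ3) q = 0 := by
  intro q
  have h0 : (Fin.castAdd 3 (0 : Fin 3)) = (0 : Fin 6) := rfl
  have h1 : (Fin.castAdd 3 (1 : Fin 3)) = (1 : Fin 6) := rfl
  have h2 : (Fin.castAdd 3 (2 : Fin 3)) = (2 : Fin 6) := rfl
  have h3 : (Fin.natAdd 3 (0 : Fin 3)) = (3 : Fin 6) := rfl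
  have h4 : (Fin.natAdd 3 (1 : Fin 3)) = (4 : Fin 6) := rfl
  have h5 : (Fin.natAdd 3 (2 : Fin 3)) = (5 : Fin 6) := rfl
  simp only [poisson, Fin.sum_univ_three, h0, h1, h2, h3, h4, h5,
    dH0, dH1, dH2, dH3, dH4, dH5, dX0, dX1, dX2, dX3, dX4, dX5]
  ring
end

section
/- In the rotationally invariant case (w₁ = w₂ = 0, b_Z = 0), the integrals satisfy {X₃², X₁^a} = 2X₁^b and {X₃², X₁^b} = −((X₃¹)² − 2H) − 2X₁^a, where X₃² = xp₂ − yp₁, X₃¹ = p₃, H = (1/2)(p₁² + p₂² + (p₃ − (1/2)b_φ(x²+y²))²) − (1/8)b_φ²(x²+y²)² + b_φw₃(x²+y²). -/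
lemma fderiv_coord (j : Fin 6) (q : Fin 6 → ℝ) :
    fderiv ℝ (fun v : Fin 6 → ℝ => v j) q = ContinuousLinearMap.proj j :=
  (hasFDerivAt_apply j q).fderiv

lemma fderiv_coord_sq (j : Fin 6) (q : Fin 6 → ℝ) :
    fderiv ℝ (fun v : Fin 6 → ℝ => v j ^ 2) q = (2 * q j) • ContinuousLinearMap.proj j := by
  have h : (fun v : Fin 6 → ℝ => v j ^ 2) = fun v => v j * v j := by funext v; ring
  rw [h, fderiv_fun_mul (by fun_prop) (by fun_prop), fderiv_coord]
  ext v; simp; ring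

lemma L3A_eq : L3A = fun v : Fin 6 → ℝ => v 0 * v 4 - v 1 * v 3 := rfl

lemma X1a_eq (bφ w₃ : ℝ) : X1a bφ 0 w₃ = fun v : Fin 6 → ℝ =>
    (v 3)^2 - bφ*(v 0)^2*(v 5 - (1/2)*bφ*((v 0)^2+(v 1)^2))
      - (1/2)*bφ^2*(v 0)^2*((v 0)^2+(v 1)^2) + 2*bφ*w₃*(v 0)^2 + 2*bφ*0*(v 0) := rfl

lemma X1b_eq (bφ w₃ : ℝ) : X1b bφ 0 0 w₃ = fun v : Fin 6 → ℝ =>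
    v 3 * v 4 - bφ*v 0*v 1*(v 5 - (1/2)*bφ*((v 0)^2+(v 1)^2))
      - (1/2)*bφ^2*v 0*v 1*((v 0)^2+(v 1)^2) + 2*bφ*w₃*v 0*v 1 + bφ*0*v 0 + bφ*0*v 1 := rfl

/-- `{X₃², X₁^a} = 2X₁^b` and `{X₃², X₁^b} = -((X₃¹)² - 2H) - 2X₁^a` in the
rotationally invariant case `w₁ = w₂ = 0`. -/
theorem rotations_action_on_integrals (bφ w₃ : ℝ) :
    ∀ q : Fin 6 → ℝ,
      poisson L3A (X1a bφ 0 w₃) q = 2 * X1b bφ 0 0 w₃ q ∧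
      poisson L3A (X1b bφ 0 0 w₃) q
        = -((X31 q)^2 - 2 * Ham bφ 0 0 w₃ q) - 2 * X1a bφ 0 w₃ q := by
  intro q
  have e0 : Fin.castAdd 3 (0:Fin 3) = (0:Fin 6) := rfl
  have e1 : Fin.castAdd 3 (1:Fin 3) = (1:Fin 6) := rfl
  have e2 : Fin.castAdd 3 (2:Fin 3) = (2:Fin 6) := rfl
  have f0 : Fin.natAdd 3 (0:Fin 3) = (3:Fin 6) := rfl
  have f1 : Fin.natAdd 3 (1:Fin 3) = (4:Fin 6) := rfl
  have f2 : Fin.natAdd 3 (2:Fin 3) = (5:Fin 6) := rfl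
  constructor <;>
  · simp only [poisson, Fin.sum_univ_three, e0, e1, e2, f0, f1, f2, L3A_eq, X1a_eq, X1b_eq]
    simp (disch := fun_prop) only [pderiv, fderiv_fun_add, fderiv_fun_sub, fderiv_fun_mul,
      fderiv_fun_const, fderiv_const_mul, fderiv_coord, fderiv_coord_sq,
      ContinuousLinearMap.smul_apply, ContinuousLinearMap.proj_apply, smul_eq_mul]
    simp [Pi.single_apply, X1a, X1b, Ham, X31, P3A, r2, L3A]
    ring
end
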